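/- Let f, g ∈ Z_p[[X]] be nonzero power series with the same μ-invariant. Then for all sufficiently large n, for any primitive p^n-th root of unity ζ, one has ord_p(f(ζ−1)) − ord_p(g(ζ−1)) = (λ_f − λ_g)/(p^n − p^{n−1}); in particular this difference tends to 0 as n → ∞, and for any constant c > 0 and n large, |ord_p(f(ζ−1)) − ord_p(g(ζ−1))| < c. -/

import Mathlib

/-!
Evaluation at a point `x` with `‖x‖ < 1` is multiplicative, and in the ultrametric field `K` the
value of a series has the norm of its strictly dominant term. For a unit that is the constant term,
of norm `1`; for a distinguished polynomial of degree `λ` it is the leading term `x ^ λ` as soon as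
`‖x‖ ^ λ > 1/p`, because all other coefficients lie in `pℤ_[p]`. Hence, with
`‖ζ - 1‖ = p ^ (-1/(p^n - p^(n-1)))`, `ord_p f(ζ - 1) = μ + λ_f / (p^n - p^(n-1))` once
`p^n - p^(n-1) > λ_f`, and the `μ` terms cancel in the difference.
-/

open PowerSeries Filter Topology

theorem IsUltrametricDist.norm_tsum_eq_of_forall_ne_le {E ι : Type*} [NormedAddCommGroup E]
    [IsUltrametricDist E] [DecidableEq ι] {f : ι → E} (hf : Summable f) {k : ι} {C : ℝ}
    (hC : 0 ≤ C) (hle : ∀ i ≠ k, ‖f i‖ ≤ C) (hlt : C < ‖f k‖) :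
    ‖∑' i, f i‖ = ‖f k‖ := by
  have hrest : ‖∑' i, if i = k then 0 else f i‖ ≤ C :=
    IsUltrametricDist.norm_tsum_le_of_forall_le_of_nonneg hC fun i => by
      split_ifs with h
      · simpa using hC
      · exact hle i h
  rw [hf.tsum_eq_add_tsum_ite k,
    IsUltrametricDist.norm_add_eq_max_of_norm_ne_norm (hrest.trans_lt hlt).ne',
    max_eq_left (hrest.trans hlt.le)]

theorem isUltrametricDist_of_norm_algebraMap_padicInt {p : ℕ} [Fact p.Prime]
    {K : Type*} [NormedField K] [Algebra ℤ_[p] K]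
    (halg : ∀ a : ℤ_[p], ‖algebraMap ℤ_[p] K a‖ = ‖a‖) : IsUltrametricDist K :=
  IsUltrametricDist.isUltrametricDist_of_forall_norm_natCast_le_one fun n => by
    rw [← map_natCast (algebraMap ℤ_[p] K), halg]
    exact PadicInt.norm_le_one _

namespace PowerSeries

variable {p : ℕ} [Fact p.Prime] {K : Type*} [NormedField K] [Algebra ℤ_[p] K]

/-- Where the series diverges, `∑'` takes the junk value `0`; the estimates below all assume
`‖x‖ < 1`. -/
noncomputable def tsumEval (h : ℤ_[p]⟦X⟧) (x : K) : K :=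
  ∑' k : ℕ, algebraMap ℤ_[p] K (coeff k h) * x ^ k

theorem tsumEval_C (a : ℤ_[p]) (x : K) : tsumEval (C a) x = algebraMap ℤ_[p] K a := by
  rw [tsumEval, tsum_eq_single 0 fun k hk => by rw [coeff_C, if_neg hk, map_zero, zero_mul]]
  rw [coeff_zero_C, pow_zero, mul_one]

variable (halg : ∀ a : ℤ_[p], ‖algebraMap ℤ_[p] K a‖ = ‖a‖)
include halg

theorem norm_coeff_mul_pow_le (h : ℤ_[p]⟦X⟧) (x : K) (k : ℕ) :
    ‖algebraMap ℤ_[p] K (coeff k h) * x ^ k‖ ≤ ‖x‖ ^ k := by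
  rw [norm_mul, norm_pow, halg]
  exact mul_le_of_le_one_left (by positivity) (PadicInt.norm_le_one _)

theorem summable_norm_tsumEval (h : ℤ_[p]⟦X⟧) {x : K} (hx : ‖x‖ < 1) :
    Summable fun k : ℕ => ‖algebraMap ℤ_[p] K (coeff k h) * x ^ k‖ :=
  .of_nonneg_of_le (fun _ => norm_nonneg _) (norm_coeff_mul_pow_le halg h x)
    (summable_geometric_of_lt_one (norm_nonneg x) hx)

variable [CompleteSpace K]

theorem tsumEval_mul (a b : ℤ_[p]⟦X⟧) {x : K} (hx : ‖x‖ < 1) :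
    tsumEval (a * b) x = tsumEval a x * tsumEval b x := by
  rw [tsumEval, tsumEval, tsumEval, tsum_mul_tsum_eq_tsum_sum_antidiagonal_of_summable_norm
    (summable_norm_tsumEval halg a hx) (summable_norm_tsumEval halg b hx)]
  refine tsum_congr fun n => ?_
  rw [coeff_mul, map_sum, Finset.sum_mul]
  refine Finset.sum_congr rfl fun kl hkl => ?_
  rw [Finset.HasAntidiagonal.mem_antidiagonal] at hkl
  rw [map_mul, ← hkl, pow_add]
  ring

theorem norm_tsumEval_unit (U : ℤ_[p]⟦X⟧ˣ) {x : K} (hx : ‖x‖ < 1) :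
    ‖tsumEval (U : ℤ_[p]⟦X⟧) x‖ = 1 := by
  have := isUltrametricDist_of_norm_algebraMap_padicInt halg
  have hU0 : ‖algebraMap ℤ_[p] K (coeff 0 (U : ℤ_[p]⟦X⟧)) * x ^ 0‖ = 1 := by
    rw [pow_zero, mul_one, halg, ← PadicInt.isUnit_iff, coeff_zero_eq_constantCoeff_apply]
    exact isUnit_constantCoeff _ U.isUnit
  rw [tsumEval, IsUltrametricDist.norm_tsum_eq_of_forall_ne_le
    (summable_norm_tsumEval halg _ hx).of_norm (norm_nonneg x) (fun k hk => ?_) (hU0 ▸ hx), hU0]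
  exact (norm_coeff_mul_pow_le halg _ x k).trans (pow_le_of_le_one (norm_nonneg x) hx.le hk)

theorem norm_tsumEval_of_isDistinguished (P : Polynomial ℤ_[p]) (hmonic : P.Monic)
    (hdist : ∀ i < P.natDegree, ‖P.coeff i‖ < 1) {x : K} (hx : ‖x‖ < 1)
    (hxp : (p : ℝ)⁻¹ < ‖x‖ ^ P.natDegree) :
    ‖tsumEval (P : ℤ_[p]⟦X⟧) x‖ = ‖x‖ ^ P.natDegree := by
  have := isUltrametricDist_of_norm_algebraMap_padicInt halg
  have htop : ‖algebraMap ℤ_[p] K (coeff P.natDegree (P : ℤ_[p]⟦X⟧)) * x ^ P.natDegree‖ =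
      ‖x‖ ^ P.natDegree := by
    rw [Polynomial.coeff_coe, hmonic.coeff_natDegree, map_one, one_mul, norm_pow]
  rw [tsumEval, IsUltrametricDist.norm_tsum_eq_of_forall_ne_le
    (summable_norm_tsumEval halg _ hx).of_norm (C := (p : ℝ)⁻¹) (by positivity) (fun k hk => ?_)
    (by rwa [htop]), htop]
  rw [Polynomial.coeff_coe]
  rcases hk.lt_or_gt with hlt | hgt
  · obtain ⟨w, hw⟩ := (PadicInt.norm_lt_one_iff_dvd _).mp (hdist k hlt)
    rw [norm_mul, norm_pow, halg, hw, norm_mul, PadicInt.norm_p]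
    calc (p : ℝ)⁻¹ * ‖w‖ * ‖x‖ ^ k ≤ (p : ℝ)⁻¹ * 1 * 1 := by
          gcongr
          · exact PadicInt.norm_le_one w
          · exact pow_le_one₀ (norm_nonneg x) hx.le
      _ = (p : ℝ)⁻¹ := by ring
  · rw [Polynomial.coeff_eq_zero_of_natDegree_lt hgt, map_zero, zero_mul, norm_zero]
    positivity

end PowerSeries

namespace PowerSeries

variable {p : ℕ} [Fact p.Prime] {K : Type*} [NormedField K] [Algebra ℤ_[p] K] [CompleteSpace K]
  (halg : ∀ a : ℤ_[p], ‖algebraMap ℤ_[p] K a‖ = ‖a‖)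
include halg

theorem norm_tsumEval_of_weierstrass {h : ℤ_[p]⟦X⟧} {μ : ℕ} {U : ℤ_[p]⟦X⟧ˣ}
    {P : Polynomial ℤ_[p]} (hmonic : P.Monic) (hdist : ∀ i < P.natDegree, ‖P.coeff i‖ < 1)
    (hfact : h = (p : ℤ_[p]⟦X⟧) ^ μ * U * P) {x : K} (hx : ‖x‖ < 1)
    (hxp : (p : ℝ)⁻¹ < ‖x‖ ^ P.natDegree) :
    ‖tsumEval h x‖ = (p : ℝ) ^ (-(μ : ℝ)) * ‖x‖ ^ P.natDegree := by
  have hpμ : (p : ℤ_[p]⟦X⟧) ^ μ = C ((p : ℤ_[p]) ^ μ) := by rw [map_pow, map_natCast]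
  rw [hfact, tsumEval_mul halg _ _ hx, tsumEval_mul halg _ _ hx, norm_mul, norm_mul, hpμ,
    tsumEval_C, halg, PadicInt.norm_p_pow, norm_tsumEval_unit halg U hx,
    norm_tsumEval_of_isDistinguished halg P hmonic hdist hx hxp, mul_one, Real.rpow_neg_natCast]

theorem neg_logb_norm_tsumEval_of_weierstrass {h : ℤ_[p]⟦X⟧} {μ : ℕ} {U : ℤ_[p]⟦X⟧ˣ}
    {P : Polynomial ℤ_[p]} (hmonic : P.Monic) (hdist : ∀ i < P.natDegree, ‖P.coeff i‖ < 1)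
    (hfact : h = (p : ℤ_[p]⟦X⟧) ^ μ * U * P) {Q : ℝ} (hQ : (P.natDegree : ℝ) < Q) {x : K}
    (hx : ‖x‖ = (p : ℝ) ^ (-(1 / Q))) :
    -Real.logb p ‖tsumEval h x‖ = μ + P.natDegree / Q := by
  have hp : (1 : ℝ) < p := mod_cast (Fact.out : p.Prime).one_lt
  have hQ0 : 0 < Q := (Nat.cast_nonneg _).trans_lt hQ
  have hx1 : ‖x‖ < 1 := hx ▸ Real.rpow_lt_one_of_one_lt_of_neg hp (by simpa using hQ0)
  have hpow : ‖x‖ ^ P.natDegree = (p : ℝ) ^ (-(P.natDegree / Q)) := by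
    rw [hx, ← Real.rpow_natCast, ← Real.rpow_mul (by positivity)]
    ring_nf
  have hxp : (p : ℝ)⁻¹ < ‖x‖ ^ P.natDegree := by
    rw [hpow, ← Real.rpow_neg_one, Real.rpow_lt_rpow_left_iff hp, neg_lt_neg_iff,
      div_lt_one hQ0]
    exact hQ
  rw [norm_tsumEval_of_weierstrass halg hmonic hdist hfact hx1 hxp, hpow,
    ← Real.rpow_add (by positivity), Real.logb_rpow (by positivity) hp.ne']
  ring

end PowerSeries

theorem pow_sub_pow_pred {R : Type*} [CommRing R] (a : R) {n : ℕ} (hn : n ≠ 0) :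
    a ^ n - a ^ (n - 1) = a ^ (n - 1) * (a - 1) := by
  obtain ⟨m, rfl⟩ := Nat.exists_eq_succ_of_ne_zero hn
  rw [Nat.succ_sub_one, pow_succ]
  ring

theorem tendsto_pow_sub_pow_pred_atTop {a : ℝ} (ha : 1 < a) :
    Tendsto (fun n : ℕ => a ^ n - a ^ (n - 1)) atTop atTop := by
  refine Tendsto.congr' ?_ ((((tendsto_pow_atTop_atTop_of_one_lt ha).comp
    (tendsto_sub_atTop_nat 1))).atTop_mul_const (sub_pos.2 ha))
  filter_upwards [eventually_ne_atTop 0] with n hn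
  exact (pow_sub_pow_pred a hn).symm

theorem stmt6_general (p : ℕ) [Fact p.Prime]
    (K : Type) [NormedField K] [CompleteSpace K] [Algebra ℤ_[p] K]
    (halg : ∀ a : ℤ_[p], ‖algebraMap ℤ_[p] K a‖ = ‖a‖)
    (f g : PowerSeries ℤ_[p])
    (μ lamf lamg : ℕ)
    (Uf Ug : (PowerSeries ℤ_[p])ˣ) (Pf Pg : Polynomial ℤ_[p])
    (hPfmonic : Pf.Monic) (hPfdeg : Pf.natDegree = lamf)
    (hPfdist : ∀ i < lamf, ‖Pf.coeff i‖ < 1)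
    (hPgmonic : Pg.Monic) (hPgdeg : Pg.natDegree = lamg)
    (hPgdist : ∀ i < lamg, ‖Pg.coeff i‖ < 1)
    (hffact : f = (p : PowerSeries ℤ_[p]) ^ μ * (Uf : PowerSeries ℤ_[p]) * (Pf : PowerSeries ℤ_[p]))
    (hgfact : g = (p : PowerSeries ℤ_[p]) ^ μ * (Ug : PowerSeries ℤ_[p]) * (Pg : PowerSeries ℤ_[p]))
    (ordp : K → ℝ) (hordp : ∀ x : K, ordp x = -Real.logb p ‖x‖)
    (F G : K → K)
    (hF : ∀ x : K, F x = ∑' k : ℕ, algebraMap ℤ_[p] K (PowerSeries.coeff k f) * x ^ k)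
    (hG : ∀ x : K, G x = ∑' k : ℕ, algebraMap ℤ_[p] K (PowerSeries.coeff k g) * x ^ k) :
    (∃ N : ℕ, ∀ n ≥ N, ∀ ζ : K, IsPrimitiveRoot ζ (p ^ n) →
      ‖ζ - 1‖ = (p : ℝ) ^ (-(1 / ((p : ℝ) ^ (n - 1) * ((p : ℝ) - 1)))) →
      ordp (F (ζ - 1)) - ordp (G (ζ - 1)) =
        ((lamf : ℝ) - (lamg : ℝ)) / ((p : ℝ) ^ n - (p : ℝ) ^ (n - 1))) ∧
    (∀ c : ℝ, 0 < c → ∃ N : ℕ, ∀ n ≥ N, ∀ ζ : K, IsPrimitiveRoot ζ (p ^ n) →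
      ‖ζ - 1‖ = (p : ℝ) ^ (-(1 / ((p : ℝ) ^ (n - 1) * ((p : ℝ) - 1)))) →
      |ordp (F (ζ - 1)) - ordp (G (ζ - 1))| < c) := by
  subst hPfdeg hPgdeg
  have hp : (1 : ℝ) < p := mod_cast (Fact.out : p.Prime).one_lt
  have hFf : F = f.tsumEval := funext hF
  have hGg : G = g.tsumEval := funext hG
  set Q : ℕ → ℝ := fun n => (p : ℝ) ^ n - (p : ℝ) ^ (n - 1)
  have hQ : Tendsto Q atTop atTop := tendsto_pow_sub_pow_pred_atTop hp
  have hdiff : ∀ᶠ n in atTop, ∀ ζ : K, IsPrimitiveRoot ζ (p ^ n) →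
      ‖ζ - 1‖ = (p : ℝ) ^ (-(1 / ((p : ℝ) ^ (n - 1) * ((p : ℝ) - 1)))) →
      ordp (F (ζ - 1)) - ordp (G (ζ - 1)) = ((Pf.natDegree : ℝ) - Pg.natDegree) / Q n := by
    filter_upwards [hQ.eventually_gt_atTop (Pf.natDegree : ℝ),
      hQ.eventually_gt_atTop (Pg.natDegree : ℝ), eventually_ne_atTop 0] with n hfQ hgQ hn _ _ hζ
    rw [← pow_sub_pow_pred _ hn] at hζ
    rw [hordp, hordp, hFf, hGg,
      PowerSeries.neg_logb_norm_tsumEval_of_weierstrass halg hPfmonic hPfdist hffact hfQ hζ,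
      PowerSeries.neg_logb_norm_tsumEval_of_weierstrass halg hPgmonic hPgdist hgfact hgQ hζ]
    ring
  have hsmall : Tendsto (fun n => ((Pf.natDegree : ℝ) - Pg.natDegree) / Q n) atTop (𝓝 0) :=
    tendsto_const_nhds.div_atTop hQ
  refine ⟨eventually_atTop.1 hdiff, fun c hc => eventually_atTop.1 ?_⟩
  filter_upwards [hdiff, (Metric.tendsto_nhds.1 hsmall) c hc] with n hn hnc ζ hζ hnorm
  rwa [hn ζ hζ hnorm, ← Real.dist_0_eq_abs]

/-- Let `f, g ∈ ℤ_p[[X]]` be nonzero with the same `μ`-invariant and `λ`-invariants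
`λ_f, λ_g` (via Weierstrass preparation).  Then, evaluating at `ζ - 1` for `ζ` a
primitive `p^n`-th root of unity and writing `ord_p(x) = -log_p ‖x‖`, for all
sufficiently large `n` one has
`ord_p(f(ζ-1)) - ord_p(g(ζ-1)) = (λ_f - λ_g)/(p^n - p^{n-1})`; in particular the
difference tends to `0`: for every `c > 0`, `|ord_p(f(ζ-1)) - ord_p(g(ζ-1))| < c`
for all large `n`. -/
theorem stmt6 (p : ℕ) [Fact p.Prime]
    (K : Type) [NormedField K] [CompleteSpace K] [Algebra ℤ_[p] K]
    (halg : ∀ a : ℤ_[p], ‖algebraMap ℤ_[p] K a‖ = ‖a‖)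
    (f g : PowerSeries ℤ_[p]) (hf : f ≠ 0) (hg : g ≠ 0)
    (μ lamf lamg : ℕ)
    (Uf Ug : (PowerSeries ℤ_[p])ˣ) (Pf Pg : Polynomial ℤ_[p])
    (hPfmonic : Pf.Monic) (hPfdeg : Pf.natDegree = lamf)
    (hPfdist : ∀ i < lamf, ‖Pf.coeff i‖ < 1)
    (hPgmonic : Pg.Monic) (hPgdeg : Pg.natDegree = lamg)
    (hPgdist : ∀ i < lamg, ‖Pg.coeff i‖ < 1)
    (hffact : f = (p : PowerSeries ℤ_[p]) ^ μ * (Uf : PowerSeries ℤ_[p]) * (Pf : PowerSeries ℤ_[p]))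
    (hgfact : g = (p : PowerSeries ℤ_[p]) ^ μ * (Ug : PowerSeries ℤ_[p]) * (Pg : PowerSeries ℤ_[p]))
    (ordp : K → ℝ) (hordp : ∀ x : K, ordp x = -Real.logb p ‖x‖)
    (F G : K → K)
    (hF : ∀ x : K, F x = ∑' k : ℕ, algebraMap ℤ_[p] K (PowerSeries.coeff k f) * x ^ k)
    (hG : ∀ x : K, G x = ∑' k : ℕ, algebraMap ℤ_[p] K (PowerSeries.coeff k g) * x ^ k) :
    (∃ N : ℕ, ∀ n ≥ N, ∀ ζ : K, IsPrimitiveRoot ζ (p ^ n) →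
      ‖ζ - 1‖ = (p : ℝ) ^ (-(1 / ((p : ℝ) ^ (n - 1) * ((p : ℝ) - 1)))) →
      ordp (F (ζ - 1)) - ordp (G (ζ - 1)) =
        ((lamf : ℝ) - (lamg : ℝ)) / ((p : ℝ) ^ n - (p : ℝ) ^ (n - 1))) ∧
    (∀ c : ℝ, 0 < c → ∃ N : ℕ, ∀ n ≥ N, ∀ ζ : K, IsPrimitiveRoot ζ (p ^ n) →
      ‖ζ - 1‖ = (p : ℝ) ^ (-(1 / ((p : ℝ) ^ (n - 1) * ((p : ℝ) - 1)))) →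
      |ordp (F (ζ - 1)) - ordp (G (ζ - 1))| < c) :=
  stmt6_general p K halg f g μ lamf lamg Uf Ug Pf Pg hPfmonic hPfdeg hPfdist hPgmonic hPgdeg hPgdist
    hffact hgfact ordp hordp F G hF hG
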